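/- Let H be a real Hilbert space, f : H → ℝ strongly quasiconvex with value γ > 0 with minimizer x*, let c > 0 and (c_k) a sequence of reals with c_k ≥ c for all k, and let (x^k) be a sequence in H with x^{k+1} ∈ Prox_{c_k f}(x^k) for all k ∈ ℕ. Then x^k converges strongly to x*, i.e., ‖x^k − x*‖ → 0 as k → ∞. -/

import Mathlib

/-!
Testing a proximal point `u ∈ Prox_{βf}(v)` against the points of the segment from `u` to a
minimizer `w`, strong quasiconvexity gives `γβ‖u - w‖² ≤ 2⟪u - v, w - u⟫` in the limit of
short segments. With the three-point identity this becomes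
`(1 + γβ)‖u - w‖² ≤ ‖v - w‖²`, so along the iteration the squared distance to `x*` decays
at least geometrically with ratio `1 / (1 + γc)`.
-/

open Filter Topology Set

section Definitions

variable {E : Type*} [SeminormedAddCommGroup E] [Module ℝ E]

def StronglyQuasiconvexWith (γ : ℝ) (f : E → ℝ) : Prop :=
  ∀ x y : E, ∀ t ∈ Icc (0 : ℝ) 1,
    f ((1 - t) • x + t • y) ≤ max (f x) (f y) - t * (1 - t) * (γ / 2) * ‖x - y‖ ^ 2

/-- `u ∈ Prox_{βf}(v)`. -/
def IsProxPoint (β : ℝ) (f : E → ℝ) (v u : E) : Prop :=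
  ∀ y : E, f u + (1 / (2 * β)) * ‖u - v‖ ^ 2 ≤ f y + (1 / (2 * β)) * ‖y - v‖ ^ 2

end Definitions

lemma le_zero_of_forall_le_mul {L M : ℝ} (h : ∀ t ∈ Ioc (0 : ℝ) 1, L ≤ t * M) : L ≤ 0 := by
  have hlim : Tendsto (fun t : ℝ => t * M) (𝓝[>] 0) (𝓝 0) := by
    simpa using (tendsto_id.mul_const M).mono_left (nhdsWithin_le_nhds (a := (0 : ℝ)))
  refine ge_of_tendsto hlim ?_
  filter_upwards [Ioc_mem_nhdsGT (zero_lt_one' ℝ)] with t ht using h t ht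

lemma tendsto_zero_of_mul_le_of_one_lt {u : ℕ → ℝ} {a : ℝ} (hu : ∀ k, 0 ≤ u k) (ha : 1 < a)
    (h : ∀ k, a * u (k + 1) ≤ u k) : Tendsto u atTop (𝓝 0) := by
  have ha₀ : 0 < a := zero_lt_one.trans ha
  have hgeom : ∀ k, u k ≤ a⁻¹ ^ k * u 0 := fun k =>
    le_geom (inv_nonneg.2 ha₀.le) k fun j _ => by
      rw [inv_mul_eq_div, le_div_iff₀ ha₀, mul_comm]; exact h j
  have hpow : Tendsto (fun k => a⁻¹ ^ k * u 0) atTop (𝓝 0) := by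
    simpa using (tendsto_pow_atTop_nhds_zero_of_lt_one (inv_nonneg.2 ha₀.le)
      (inv_lt_one_of_one_lt₀ ha)).mul_const (u 0)
  exact squeeze_zero hu hgeom hpow

section Prox

variable {H : Type*} [NormedAddCommGroup H] [InnerProductSpace ℝ H]
  {f : H → ℝ} {γ β : ℝ} {u v w : H}

lemma IsProxPoint.mul_sq_norm_le_inner (hprox : IsProxPoint β f v u) (hβ : 0 < β)
    (hf : StronglyQuasiconvexWith γ f) (hw : f w ≤ f u) :
    γ * β * ‖u - w‖ ^ 2 ≤ 2 * inner ℝ (u - v) (w - u) := by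
  set A := ‖u - w‖ ^ 2
  set B := inner ℝ (u - v) (w - u)
  suffices h : ∀ t ∈ Ioc (0 : ℝ) 1, γ * β * A - 2 * B ≤ t * (γ * β * A + A) by
    linarith [le_zero_of_forall_le_mul h]
  rintro t ⟨ht₀, ht₁⟩
  have hquasi : f ((1 - t) • u + t • w) ≤ f u - t * (1 - t) * (γ / 2) * A := by
    simpa only [max_eq_left hw] using hf u w t ⟨ht₀.le, ht₁⟩
  have hexpand : ‖((1 - t) • u + t • w) - v‖ ^ 2 = ‖u - v‖ ^ 2 + 2 * t * B + t ^ 2 * A := by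
    rw [show ((1 - t) • u + t • w) - v = (u - v) + t • (w - u) by module, norm_add_sq_real,
      real_inner_smul_right, norm_smul, Real.norm_eq_abs, abs_of_pos ht₀, mul_pow,
      norm_sub_rev w u]
    ring
  have hcompare := hprox ((1 - t) • u + t • w)
  rw [hexpand] at hcompare
  have h2β : 0 < 2 * β := by linarith
  have hsegment : t * (1 - t) * (γ / 2) * A ≤ 1 / (2 * β) * (2 * t * B + t ^ 2 * A) := by
    linarith
  rw [one_div_mul_eq_div, le_div_iff₀ h2β] at hsegment
  have hdivided : (1 - t) * γ * β * A ≤ 2 * B + t * A :=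
    le_of_mul_le_mul_left (by linarith) ht₀
  linarith

lemma IsProxPoint.sq_norm_le (hprox : IsProxPoint β f v u) (hβ : 0 < β)
    (hf : StronglyQuasiconvexWith γ f) (hw : f w ≤ f u) :
    (1 + γ * β) * ‖u - w‖ ^ 2 + ‖u - v‖ ^ 2 ≤ ‖v - w‖ ^ 2 := by
  have hinner := hprox.mul_sq_norm_le_inner hβ hf hw
  have hsplit : ‖v - w‖ ^ 2 = ‖u - v‖ ^ 2 + 2 * inner ℝ (u - v) (w - u) + ‖u - w‖ ^ 2 := by
    rw [show v - w = -(u - v) + -(w - u) by abel, norm_add_sq_real, inner_neg_neg,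
      norm_neg, norm_neg, norm_sub_rev w u]
  linarith

end Prox

theorem ppa_strong_convergence_general
    {H : Type*} [NormedAddCommGroup H] [InnerProductSpace ℝ H]
    (f : H → ℝ) (γ : ℝ) (hγ : 0 < γ)
    (hf : ∀ x y : H, ∀ t ∈ Set.Icc (0 : ℝ) 1,
      f ((1 - t) • x + t • y) ≤ max (f x) (f y) - t * (1 - t) * (γ / 2) * ‖x - y‖ ^ 2)
    (xs : H) (hxs : ∀ y : H, f xs ≤ f y)
    (c : ℝ) (hc : 0 < c) (ck : ℕ → ℝ) (hck : ∀ k, c ≤ ck k)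
    (x : ℕ → H)
    (hx : ∀ k : ℕ, ∀ y : H,
      f (x (k + 1)) + (1 / (2 * ck k)) * ‖x (k + 1) - x k‖ ^ 2
        ≤ f y + (1 / (2 * ck k)) * ‖y - x k‖ ^ 2) :
    Filter.Tendsto (fun k => ‖x k - xs‖) Filter.atTop (nhds 0) := by
  have hcontract : ∀ k, (1 + γ * c) * ‖x (k + 1) - xs‖ ^ 2 ≤ ‖x k - xs‖ ^ 2 := fun k => by
    have hstep := IsProxPoint.sq_norm_le (hx k) (hc.trans_le (hck k)) hf (hxs _)
    have hγc : γ * c ≤ γ * ck k := mul_le_mul_of_nonneg_left (hck k) hγ.le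
    nlinarith [sq_nonneg ‖x (k + 1) - xs‖, sq_nonneg ‖x (k + 1) - x k‖]
  have hsq : Tendsto (fun k => ‖x k - xs‖ ^ 2) atTop (𝓝 0) :=
    tendsto_zero_of_mul_le_of_one_lt (fun k => by positivity)
      (lt_add_of_pos_right 1 (mul_pos hγ hc)) hcontract
  simpa using hsq.sqrt

/-- The proximal point algorithm for a strongly quasiconvex
function converges strongly to the minimizer. -/
theorem ppa_strong_convergence
    {H : Type*} [NormedAddCommGroup H] [InnerProductSpace ℝ H] [CompleteSpace H]
    (f : H → ℝ) (γ : ℝ) (hγ : 0 < γ)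
    (hf : ∀ x y : H, ∀ t ∈ Set.Icc (0 : ℝ) 1,
      f ((1 - t) • x + t • y) ≤ max (f x) (f y) - t * (1 - t) * (γ / 2) * ‖x - y‖ ^ 2)
    (xs : H) (hxs : ∀ y : H, f xs ≤ f y)
    (c : ℝ) (hc : 0 < c) (ck : ℕ → ℝ) (hck : ∀ k, c ≤ ck k)
    (x : ℕ → H)
    (hx : ∀ k : ℕ, ∀ y : H,
      f (x (k + 1)) + (1 / (2 * ck k)) * ‖x (k + 1) - x k‖ ^ 2
        ≤ f y + (1 / (2 * ck k)) * ‖y - x k‖ ^ 2) :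
    Filter.Tendsto (fun k => ‖x k - xs‖) Filter.atTop (nhds 0) :=
  ppa_strong_convergence_general f γ hγ hf xs hxs c hc ck hck x hx
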